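/- arXiv:2401.07146 — 3 statements merged into one kernel-verified Lean document; each statement's English description precedes it below -/
import Mathlib

section
/- For λ ∈ Q_p/Z_p with |λ|_p = p^n > 1 and ξ, η ∈ (Q_p/Z_p)^d, the map π_{(ξ,η,λ)}(x,y,z)φ(u) := e^{2πi{ξ·x + η·y + λ(z + u·y)}_p} φ(u+x) defines a unitary representation of the Heisenberg group H_d(Z_p) on the space H_λ of locally constant functions on Z_p^d that are invariant under translation by p^n Z_p^d. -/
noncomputable section

variable (p : ℕ) [Fact p.Prime] (d : ℕ)

def dotZ (x y : Fin d → ℤ_[p]) : ℤ_[p] := ∑ i, x i * y i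

/-- The Heisenberg group `H_d(ℤ_p)`: the set `ℤ_p^{2d+1}` written as triples `(x, y, z)`. -/
@[ext] structure Heis where
  x : Fin d → ℤ_[p]
  y : Fin d → ℤ_[p]
  z : ℤ_[p]

variable {p d}

instance : Mul (Heis p d) :=
  ⟨fun g g' => ⟨g.x + g'.x, g.y + g'.y, g.z + g'.z + dotZ p d g.x g'.y⟩⟩
instance : One (Heis p d) := ⟨⟨0, 0, 0⟩⟩
instance : Inv (Heis p d) :=
  ⟨fun g => ⟨-g.x, -g.y, -g.z + dotZ p d g.x g.y⟩⟩

lemma heis_mul_def (g g' : Heis p d) :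
    g * g' = ⟨g.x + g'.x, g.y + g'.y, g.z + g'.z + dotZ p d g.x g'.y⟩ := rfl
lemma heis_one_def : (1 : Heis p d) = ⟨0, 0, 0⟩ := rfl
lemma heis_inv_def (g : Heis p d) :
    g⁻¹ = ⟨-g.x, -g.y, -g.z + dotZ p d g.x g.y⟩ := rfl

instance heisGroup : Group (Heis p d) :=
  Group.ofLeftAxioms
    (by
      rintro ⟨a1, a2, a3⟩ ⟨b1, b2, b3⟩ ⟨c1, c2, c3⟩
      simp only [heis_mul_def, dotZ, Pi.add_apply, add_mul, mul_add,
        Finset.sum_add_distrib, Heis.mk.injEq]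
      refine ⟨add_assoc _ _ _, add_assoc _ _ _, by ring⟩)
    (by
      rintro ⟨a1, a2, a3⟩
      simp [heis_mul_def, heis_one_def, dotZ])
    (by
      rintro ⟨a1, a2, a3⟩
      simp only [heis_mul_def, heis_inv_def, heis_one_def, dotZ,
        Pi.neg_apply, Heis.mk.injEq, neg_add_cancel]
      refine ⟨trivial, trivial, by ring_nf; simp⟩)

open MeasureTheory

variable (p d)

/-- Truncation of a `p`-adic number to a `p`-adic integer (`0` if it is not an integer). -/
def padicToInt (x : ℚ_[p]) : ℤ_[p] := if h : ‖x‖ ≤ 1 then ⟨x, h⟩ else 0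

/-- The `p`-adic fractional part `{x}_p`, as a rational number. -/
def padicFract (x : ℚ_[p]) : ℚ :=
  ((padicToInt p (x * (p : ℚ_[p]) ^ (-x.valuation).toNat)).appr (-x.valuation).toNat : ℚ) /
    (p : ℚ) ^ (-x.valuation).toNat

/-- The additive character `x ↦ e^{2πi {x}_p}` of `ℚ_p`. -/
def eChar (x : ℚ_[p]) : ℂ := Complex.exp (2 * Real.pi * Complex.I * (padicFract p x : ℂ))

instance : MeasurableSpace ℤ_[p] := borel _
instance : BorelSpace ℤ_[p] := ⟨rfl⟩
instance : TopologicalSpace (Heis p d) :=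
  TopologicalSpace.induced (fun g => (g.x, g.y, g.z)) inferInstance
instance : MeasurableSpace (Heis p d) := borel _
instance : BorelSpace (Heis p d) := ⟨rfl⟩

/-- Pairing of a `ℚ_p`-covector with a `ℤ_p`-vector. -/
def dotQZ (ξ : Fin d → ℚ_[p]) (x : Fin d → ℤ_[p]) : ℚ_[p] := ∑ i, ξ i * (x i : ℚ_[p])

/-- The Schrödinger-type realization
`π_{(ξ,η,λ)}(x,y,z)φ(u) = e^{2πi{ξ·x + η·y + λ(z + u·y)}_p} φ(u + x)`. -/
def piAct (ξ η : Fin d → ℚ_[p]) (lam : ℚ_[p]) (g : Heis p d)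
    (φ : (Fin d → ℤ_[p]) → ℂ) : (Fin d → ℤ_[p]) → ℂ := fun u =>
  eChar p (dotQZ p d ξ g.x + dotQZ p d η g.y +
      lam * ((g.z : ℚ_[p]) + (dotZ p d u g.y : ℚ_[p]))) * φ (u + g.x)

/-- `φ` is invariant under translations by `p^n ℤ_p^d`. -/
def InvariantUnder (n : ℕ) (φ : (Fin d → ℤ_[p]) → ℂ) : Prop :=
  ∀ u v : Fin d → ℤ_[p], (∀ i, ‖v i‖ ≤ (p : ℝ) ^ (-(n : ℤ))) → φ (u + v) = φ u

/-- The indicator function of the coset `h + p^n ℤ_p^d`. -/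
def indC (n : ℕ) (h : Fin d → ℤ_[p]) : (Fin d → ℤ_[p]) → ℂ :=
  Set.indicator {u | ∀ i, ‖u i - h i‖ ≤ (p : ℝ) ^ (-(n : ℤ))} fun _ => (1 : ℂ)

/-! The character `x ↦ e^{2πi{x}_p}` of `ℚ_p` is additive and trivial on `ℤ_p`: the defect
`{a + b}_p - {a}_p - {b}_p` is a rational number with a `p`-power denominator that is also a
`p`-adic integer, hence an integer. Additivity turns the homomorphism property into the cocycle
identity for the phase `ξ·x + η·y + λ(z + u·y)`; since `|λ|_p = p^n`, translating `u` by
`p^n ℤ_p^d` changes the phase by a `p`-adic integer, which the character does not see; and as the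
phase has modulus one, unitarity reduces to translation invariance of `μ`. -/

variable {p d}

lemma padicFract_eq_zero_of_norm_le_one {x : ℚ_[p]} (hx : ‖x‖ ≤ 1) :
    padicFract p x = 0 := by
  have hm : (-x.valuation).toNat = 0 :=
    Int.toNat_eq_zero.2 (by linarith [(Padic.norm_le_one_iff_val_nonneg x).1 hx])
  simp [padicFract, hm, PadicInt.appr]

lemma norm_mul_pow_neg_valuation_le_one (x : ℚ_[p]) :
    ‖x * (p : ℚ_[p]) ^ (-x.valuation).toNat‖ ≤ 1 := by
  rcases eq_or_ne x 0 with rfl | hx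
  · simp
  have hp : (1 : ℝ) ≤ p := mod_cast (Fact.out : p.Prime).one_le
  rw [norm_mul, Padic.norm_eq_zpow_neg_valuation hx, norm_pow, Padic.norm_p, inv_pow,
    ← zpow_natCast, ← zpow_neg, ← zpow_add₀ (by positivity)]
  exact zpow_le_one_of_nonpos₀ hp (by omega)

lemma padicFract_den_dvd (x : ℚ_[p]) : (padicFract p x).den ∣ p ^ (-x.valuation).toNat := by
  have h := Rat.den_dvd ((padicToInt p (x * (p : ℚ_[p]) ^ (-x.valuation).toNat)).appr
    (-x.valuation).toNat) ((p ^ (-x.valuation).toNat : ℕ) : ℤ)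
  rw [Rat.divInt_eq_div] at h
  push_cast at h
  exact Int.natCast_dvd_natCast.1 (by simpa [padicFract] using h)

lemma norm_sub_padicFract_le_one (x : ℚ_[p]) : ‖x - (padicFract p x : ℚ_[p])‖ ≤ 1 := by
  set m := (-x.valuation).toNat
  have hy := norm_mul_pow_neg_valuation_le_one x
  set y : ℤ_[p] := ⟨x * (p : ℚ_[p]) ^ m, hy⟩
  have hfract : padicFract p x = (y.appr m : ℚ) / (p : ℚ) ^ m := by
    have hy' : padicToInt p (x * (p : ℚ_[p]) ^ m) = y := dif_pos hy
    rw [padicFract, hy']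
  have hpm : (p : ℚ_[p]) ^ m ≠ 0 := pow_ne_zero _ (mod_cast (Fact.out : p.Prime).ne_zero)
  have hsub : x - (padicFract p x : ℚ_[p]) = ((y - y.appr m : ℤ_[p]) : ℚ_[p]) / (p : ℚ_[p]) ^ m :=
    by rw [hfract]; push_cast; field_simp; rfl
  have happr : ‖y - y.appr m‖ ≤ (p : ℝ) ^ (-(m : ℤ)) :=
    (PadicInt.norm_le_pow_iff_mem_span_pow _ m).2 (PadicInt.appr_spec m y)
  have hnorm : ‖(p : ℚ_[p]) ^ m‖ = (p : ℝ) ^ (-(m : ℤ)) := by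
    rw [norm_pow, Padic.norm_p, inv_pow, zpow_neg, zpow_natCast]
  rw [hsub, norm_div, hnorm, PadicInt.padic_norm_e_of_padicInt]
  exact div_le_one_of_le₀ happr (by positivity)

lemma Rat.den_eq_one_of_norm_padic_le_one {r : ℚ} {M : ℕ} (hr : ‖(r : ℚ_[p])‖ ≤ 1)
    (hden : r.den ∣ p ^ M) : r.den = 1 := by
  have hcop : p.Coprime r.den :=
    PadicInt.norm_natCast_eq_one_iff.1 (PadicInt.isUnit_iff.1 (PadicInt.isUnit_den r hr))
  exact Nat.Coprime.eq_one_of_dvd (hcop.pow_left M).symm hden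

lemma eChar_add (a b : ℚ_[p]) : eChar p (a + b) = eChar p a * eChar p b := by
  set r : ℚ := padicFract p (a + b) - padicFract p a - padicFract p b with hr
  have hnorm : ‖(r : ℚ_[p])‖ ≤ 1 := by
    have h := norm_sub_padicFract_le_one (p := p)
    have hsplit : (r : ℚ_[p]) = (a - padicFract p a) + (b - padicFract p b)
        + -((a + b) - padicFract p (a + b)) := by
      push_cast [hr]; ring
    rw [hsplit]
    refine (IsUltrametricDist.norm_add_le_max _ _).trans (max_le ?_ ?_)
    · exact (IsUltrametricDist.norm_add_le_max _ _).trans (max_le (h a) (h b))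
    · exact (norm_neg _).trans_le (h _)
  have hden : r.den ∣ p ^ ((-(a + b).valuation).toNat + (-a.valuation).toNat
      + (-b.valuation).toNat) := by
    simp only [pow_add]
    exact (Rat.sub_den_dvd _ _).trans (mul_dvd_mul ((Rat.sub_den_dvd _ _).trans
      (mul_dvd_mul (padicFract_den_dvd _) (padicFract_den_dvd _))) (padicFract_den_dvd _))
  have hint : (r : ℂ) = (r.num : ℂ) := by
    exact_mod_cast (Rat.coe_int_num_of_den_eq_one
      (Rat.den_eq_one_of_norm_padic_le_one hnorm hden)).symm
  have hfract : (padicFract p (a + b) : ℂ) = padicFract p a + padicFract p b + r.num := by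
    rw [← hint, hr]; push_cast; ring
  have hperiod : Complex.exp (2 * Real.pi * Complex.I * r.num) = 1 := by
    rw [mul_comm]; exact Complex.exp_int_mul_two_pi_mul_I _
  rw [eChar, hfract, mul_add, Complex.exp_add, hperiod, mul_one, mul_add, Complex.exp_add, eChar,
    eChar]

lemma eChar_eq_one_of_norm_le_one {x : ℚ_[p]} (hx : ‖x‖ ≤ 1) : eChar p x = 1 := by
  simp [eChar, padicFract_eq_zero_of_norm_le_one hx]

lemma eChar_mul_conj (x : ℚ_[p]) : eChar p x * starRingEnd ℂ (eChar p x) = 1 := by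
  simp [eChar, Complex.mul_conj, Complex.normSq_eq_norm_sq, Complex.norm_exp]

lemma dotZ_add_left (a b y : Fin d → ℤ_[p]) :
    dotZ p d (a + b) y = dotZ p d a y + dotZ p d b y :=
  add_dotProduct a b y

lemma dotZ_add_right (x y y' : Fin d → ℤ_[p]) :
    dotZ p d x (y + y') = dotZ p d x y + dotZ p d x y' :=
  dotProduct_add x y y'

lemma norm_dotZ_le {x : Fin d → ℤ_[p]} {r : ℝ} (hr : 0 ≤ r) (hx : ∀ i, ‖x i‖ ≤ r)
    (y : Fin d → ℤ_[p]) : ‖dotZ p d x y‖ ≤ r :=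
  IsUltrametricDist.norm_sum_le_of_forall_le_of_nonneg hr fun i _ =>
    (norm_mul_le _ _).trans ((mul_le_of_le_one_right (norm_nonneg _) (PadicInt.norm_le_one _)).trans
      (hx i))

lemma dotQZ_add (ξ : Fin d → ℚ_[p]) (x x' : Fin d → ℤ_[p]) :
    dotQZ p d ξ (x + x') = dotQZ p d ξ x + dotQZ p d ξ x' := by
  simp only [dotQZ, Pi.add_apply, PadicInt.coe_add, mul_add, Finset.sum_add_distrib]

variable {ξ η : Fin d → ℚ_[p]} {lam : ℚ_[p]}

lemma piAct_invariantUnder {n : ℕ} (hlam : ‖lam‖ ≤ (p : ℝ) ^ (n : ℤ)) (g : Heis p d)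
    {φ : (Fin d → ℤ_[p]) → ℂ} (hφ : InvariantUnder p d n φ) :
    InvariantUnder p d n (piAct p d ξ η lam g φ) := by
  intro u v hv
  have hp : (0 : ℝ) < p := mod_cast (Fact.out : p.Prime).pos
  have hshift : ‖lam * (dotZ p d v g.y : ℚ_[p])‖ ≤ 1 := by
    rw [norm_mul, PadicInt.padic_norm_e_of_padicInt]
    calc ‖lam‖ * ‖dotZ p d v g.y‖ ≤ (p : ℝ) ^ (n : ℤ) * (p : ℝ) ^ (-(n : ℤ)) :=
          mul_le_mul hlam (norm_dotZ_le (by positivity) hv _) (norm_nonneg _) (by positivity)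
      _ = 1 := by rw [← zpow_add₀ hp.ne', add_neg_cancel, zpow_zero]
  have hphase : dotQZ p d ξ g.x + dotQZ p d η g.y + lam * (g.z + dotZ p d (u + v) g.y : ℚ_[p]) =
      (dotQZ p d ξ g.x + dotQZ p d η g.y + lam * (g.z + dotZ p d u g.y : ℚ_[p])) +
        lam * (dotZ p d v g.y : ℚ_[p]) := by
    rw [dotZ_add_left, PadicInt.coe_add]; ring
  simp only [piAct]
  rw [hphase, eChar_add, eChar_eq_one_of_norm_le_one hshift, mul_one, add_right_comm u v,
    hφ (u + g.x) v hv]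

lemma piAct_one (φ : (Fin d → ℤ_[p]) → ℂ) : piAct p d ξ η lam 1 φ = φ := by
  funext u
  simp [piAct, heis_one_def, dotQZ, dotZ, eChar_eq_one_of_norm_le_one]

lemma piAct_mul (g g' : Heis p d) (φ : (Fin d → ℤ_[p]) → ℂ) :
    piAct p d ξ η lam (g * g') φ = piAct p d ξ η lam g (piAct p d ξ η lam g' φ) := by
  funext u
  simp only [piAct, heis_mul_def]
  rw [← mul_assoc, ← eChar_add, add_assoc u]
  congr 2
  rw [dotQZ_add, dotQZ_add, dotZ_add_right, dotZ_add_left]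
  push_cast
  ring

lemma integral_piAct_mul_conj (μ : Measure (Fin d → ℤ_[p])) [μ.IsAddRightInvariant]
    (g : Heis p d) (φ ψ : (Fin d → ℤ_[p]) → ℂ) :
    ∫ u, piAct p d ξ η lam g φ u * starRingEnd ℂ (piAct p d ξ η lam g ψ u) ∂μ =
      ∫ u, φ u * starRingEnd ℂ (ψ u) ∂μ := by
  have hphase (u : Fin d → ℤ_[p]) :
      piAct p d ξ η lam g φ u * starRingEnd ℂ (piAct p d ξ η lam g ψ u) =
        φ (u + g.x) * starRingEnd ℂ (ψ (u + g.x)) := by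
    simp only [piAct, map_mul]
    rw [mul_mul_mul_comm, eChar_mul_conj, one_mul]
  simp_rw [hphase]
  exact integral_add_right_eq_self (fun u => φ u * starRingEnd ℂ (ψ u)) g.x

theorem piAct_unitary_representation_general (ξ η : Fin d → ℚ_[p]) (lam : ℚ_[p]) (n : ℕ)
    (hlam : ‖lam‖ = (p : ℝ) ^ (n : ℤ)) :
    (∀ (g : Heis p d) (φ : (Fin d → ℤ_[p]) → ℂ), InvariantUnder p d n φ →
        InvariantUnder p d n (piAct p d ξ η lam g φ)) ∧
    (∀ φ : (Fin d → ℤ_[p]) → ℂ, piAct p d ξ η lam 1 φ = φ) ∧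
    (∀ (g g' : Heis p d) (φ : (Fin d → ℤ_[p]) → ℂ),
        piAct p d ξ η lam (g * g') φ = piAct p d ξ η lam g (piAct p d ξ η lam g' φ)) ∧
    (∀ μ : MeasureTheory.Measure (Fin d → ℤ_[p]),
        (∀ v, μ.map (· + v) = μ) → μ Set.univ = 1 →
        ∀ (g : Heis p d) (φ ψ : (Fin d → ℤ_[p]) → ℂ), InvariantUnder p d n φ →
          InvariantUnder p d n ψ →
          ∫ u, piAct p d ξ η lam g φ u * (starRingEnd ℂ) (piAct p d ξ η lam g ψ u) ∂μ =
            ∫ u, φ u * (starRingEnd ℂ) (ψ u) ∂μ) := by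
  refine ⟨fun g _ hφ => piAct_invariantUnder hlam.le g hφ, piAct_one, piAct_mul,
    fun μ hμ _ g φ ψ _ _ => ?_⟩
  have : μ.IsAddRightInvariant := ⟨hμ⟩
  exact integral_piAct_mul_conj μ g φ ψ

/-- For `λ` with `|λ|_p = p^n > 1` and `ξ, η ∈ (ℚ_p/ℤ_p)^d`, the formula
`π_{(ξ,η,λ)}(x,y,z)φ(u) = e^{2πi{ξ·x + η·y + λ(z + u·y)}_p} φ(u+x)` defines a unitary
representation of `H_d(ℤ_p)` on the space `H_λ` of functions on `ℤ_p^d` invariant under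
translation by `p^n ℤ_p^d`. -/
theorem piAct_unitary_representation (ξ η : Fin d → ℚ_[p]) (lam : ℚ_[p]) (n : ℕ)
    (hn : 0 < n) (hlam : ‖lam‖ = (p : ℝ) ^ (n : ℤ)) :
    (∀ (g : Heis p d) (φ : (Fin d → ℤ_[p]) → ℂ), InvariantUnder p d n φ →
        InvariantUnder p d n (piAct p d ξ η lam g φ)) ∧
    (∀ φ : (Fin d → ℤ_[p]) → ℂ, piAct p d ξ η lam 1 φ = φ) ∧
    (∀ (g g' : Heis p d) (φ : (Fin d → ℤ_[p]) → ℂ),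
        piAct p d ξ η lam (g * g') φ = piAct p d ξ η lam g (piAct p d ξ η lam g' φ)) ∧
    (∀ μ : MeasureTheory.Measure (Fin d → ℤ_[p]),
        (∀ v, μ.map (· + v) = μ) → μ Set.univ = 1 →
        ∀ (g : Heis p d) (φ ψ : (Fin d → ℤ_[p]) → ℂ), InvariantUnder p d n φ →
          InvariantUnder p d n ψ →
          ∫ u, piAct p d ξ η lam g φ u * (starRingEnd ℂ) (piAct p d ξ η lam g ψ u) ∂μ =
            ∫ u, φ u * (starRingEnd ℂ) (ψ u) ∂μ) :=
  piAct_unitary_representation_general ξ η lam n hlam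
end
end

section
/- Let T be a left-invariant operator on H_d with symbol σ(ξ,η,λ) (a linear endomorphism of the representation space of π_{(ξ,η,λ)}). If there exists m ∈ R and C > 0 such that inf{‖σ(ξ,η,λ)v‖ : ‖v‖ = 1} ≥ C ‖(ξ,η,λ)‖_p^m for all ‖(ξ,η,λ)‖_p sufficiently large, then T is globally hypoelliptic: T f = g with f a distribution and g Schwartz implies f is Schwartz. -/
noncomputable section

variable (p : ℕ) [Fact p.Prime] (d : ℕ)

/-- `n_λ = -v(λ)`, so that `|λ|_p = p^{n_λ}`. -/
def nLam (lam : ℚ_[p]) : ℕ := (-lam.valuation).toNat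

/-- A point of the unitary dual of `H_d(ℤ_p)`: a tuple `(ξ, η, λ)` of canonical
representatives with `(ξ, η) ∈ ℚ_p^{2d}/p^{v(λ)}ℤ_p^{2d}`. -/
def IsDualPt (t : (Fin d → ℚ_[p]) × (Fin d → ℚ_[p]) × ℚ_[p]) : Prop :=
  (t.2.2 = 1 ∨ (1 < ‖t.2.2‖ ∧ (padicFract p t.2.2 : ℚ_[p]) = t.2.2)) ∧
    (∀ i, (padicFract p (t.1 i * (p : ℚ_[p]) ^ nLam p t.2.2) : ℚ_[p]) =
      t.1 i * (p : ℚ_[p]) ^ nLam p t.2.2) ∧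
    (∀ i, (padicFract p (t.2.1 i * (p : ℚ_[p]) ^ nLam p t.2.2) : ℚ_[p]) =
      t.2.1 i * (p : ℚ_[p]) ^ nLam p t.2.2)

/-- The norm `‖(ξ,η,λ)‖_p` on the unitary dual. -/
def dualNorm (t : (Fin d → ℚ_[p]) × (Fin d → ℚ_[p]) × ℚ_[p]) : ℝ :=
  max (max (⨆ i, ‖t.1 i‖) (⨆ i, ‖t.2.1 i‖)) ‖t.2.2‖

/-- The Hilbert-space norm of a vector in the representation space of `π_{(ξ,η,λ)}`. -/
def vecNorm {ι : Type*} [Fintype ι] (v : ι → ℂ) : ℝ := Real.sqrt (∑ i, ‖v i‖ ^ 2)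

/-- `‖σ‖_inf = inf{‖σ v‖ : ‖v‖ = 1}`. -/
def infNorm {ι : Type*} [Fintype ι] (σ : Matrix ι ι ℂ) : ℝ :=
  sInf {r | ∃ v : ι → ℂ, vecNorm v = 1 ∧ r = vecNorm (σ.mulVec v)}

/-- The Hilbert–Schmidt norm. -/
def hsNorm {ι : Type*} [Fintype ι] (σ : Matrix ι ι ℂ) : ℝ :=
  Real.sqrt (∑ i, ∑ j, ‖σ i j‖ ^ 2)

/-- A field of Fourier coefficients is Schwartz if it has rapid decay. -/
def IsSchwartzField (F : ∀ t : (Fin d → ℚ_[p]) × (Fin d → ℚ_[p]) × ℚ_[p],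
    Matrix (Fin d → Fin (p ^ nLam p t.2.2)) (Fin d → Fin (p ^ nLam p t.2.2)) ℂ) : Prop :=
  ∀ k : ℕ, ∃ C : ℝ, ∀ t, IsDualPt p d t → hsNorm (F t) ≤ C * dualNorm p d t ^ (-(k : ℝ))

/-- A field of Fourier coefficients is tempered (i.e. represents a distribution) if it has at
most polynomial growth. -/
def IsTemperedField (F : ∀ t : (Fin d → ℚ_[p]) × (Fin d → ℚ_[p]) × ℚ_[p],
    Matrix (Fin d → Fin (p ^ nLam p t.2.2)) (Fin d → Fin (p ^ nLam p t.2.2)) ℂ) : Prop :=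
  ∃ (k : ℕ) (C : ℝ), ∀ t, IsDualPt p d t → hsNorm (F t) ≤ C * dualNorm p d t ^ (k : ℝ)

lemma infNorm_nonneg' {ι : Type*} [Fintype ι] (σ : Matrix ι ι ℂ) : 0 ≤ infNorm σ := by
  unfold infNorm
  rcases Set.eq_empty_or_nonempty {r | ∃ v : ι → ℂ, vecNorm v = 1 ∧ r = vecNorm (σ.mulVec v)}
    with h | h
  · rw [h, Real.sInf_empty]
  · exact le_csInf h (by rintro r ⟨v, _, rfl⟩; exact Real.sqrt_nonneg _)

lemma vecNorm_smul' {ι : Type*} [Fintype ι] (a : ℂ) (v : ι → ℂ) :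
    vecNorm (a • v) = ‖a‖ * vecNorm v := by
  unfold vecNorm
  rw [← Real.sqrt_sq (norm_nonneg a), ← Real.sqrt_mul (by positivity), Finset.mul_sum]
  congr 1
  refine Finset.sum_congr rfl fun i _ => ?_
  simp [norm_mul, mul_pow]

lemma infNorm_mulVec_le {ι : Type*} [Fintype ι] [Nonempty ι] (σ : Matrix ι ι ℂ) (v : ι → ℂ) :
    infNorm σ * vecNorm v ≤ vecNorm (σ.mulVec v) := by
  have hbdd : BddBelow {r | ∃ v : ι → ℂ, vecNorm v = 1 ∧ r = vecNorm (σ.mulVec v)} :=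
    ⟨0, by rintro r ⟨w, _, rfl⟩; exact Real.sqrt_nonneg _⟩
  have hc0 : 0 ≤ vecNorm v := Real.sqrt_nonneg _
  rcases eq_or_lt_of_le hc0 with h0 | h0
  · -- vecNorm v = 0, hence v = 0
    have hsum : ∑ i, ‖v i‖ ^ 2 = 0 := by
      have h1 : Real.sqrt (∑ i, ‖v i‖ ^ 2) = 0 := h0.symm
      have h2 : 0 ≤ ∑ i, ‖v i‖ ^ 2 := Finset.sum_nonneg fun i _ => by positivity
      nlinarith [Real.sq_sqrt h2]
    have hv : v = 0 := by
      funext i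
      have := (Finset.sum_eq_zero_iff_of_nonneg
        (fun i _ => by positivity : ∀ i ∈ Finset.univ, (0:ℝ) ≤ ‖v i‖ ^ 2)).mp hsum i
        (Finset.mem_univ i)
      have : ‖v i‖ = 0 := by nlinarith [norm_nonneg (v i)]
      simpa using this
    rw [← h0, hv]
    simp only [Matrix.mulVec_zero, mul_zero]
    exact Real.sqrt_nonneg _
  · -- general case by scaling
    set c := vecNorm v with hc
    have hcne : (c : ℂ) ≠ 0 := by exact_mod_cast ne_of_gt h0
    have hmem : vecNorm (σ.mulVec (((c : ℂ))⁻¹ • v)) ∈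
        {r | ∃ w : ι → ℂ, vecNorm w = 1 ∧ r = vecNorm (σ.mulVec w)} := by
      refine ⟨((c : ℂ))⁻¹ • v, ?_, rfl⟩
      rw [vecNorm_smul']
      have : ‖((c : ℂ))⁻¹‖ = c⁻¹ := by
        rw [norm_inv, Complex.norm_real, Real.norm_eq_abs, abs_of_nonneg hc0]
      rw [this, ← hc, inv_mul_cancel₀ (ne_of_gt h0)]
    have hle : infNorm σ ≤ vecNorm (σ.mulVec (((c : ℂ))⁻¹ • v)) := csInf_le hbdd hmem
    rw [Matrix.mulVec_smul, vecNorm_smul'] at hle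
    have hni : ‖((c : ℂ))⁻¹‖ = c⁻¹ := by
      rw [norm_inv, Complex.norm_real, Real.norm_eq_abs, abs_of_nonneg hc0]
    rw [hni] at hle
    calc infNorm σ * c ≤ c⁻¹ * vecNorm (σ.mulVec v) * c :=
          mul_le_mul_of_nonneg_right hle hc0
      _ = vecNorm (σ.mulVec v) := by
          field_simp

lemma infNorm_mul_hsNorm_le {ι : Type*} [Fintype ι] [Nonempty ι] (σ F : Matrix ι ι ℂ) :
    infNorm σ * hsNorm F ≤ hsNorm (σ * F) := by
  have h1 : 0 ≤ infNorm σ := infNorm_nonneg' σ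
  unfold hsNorm
  rw [← Real.sqrt_sq h1, ← Real.sqrt_mul (by positivity)]
  apply Real.sqrt_le_sqrt
  rw [Finset.sum_comm (s := Finset.univ) (t := Finset.univ),
    Finset.sum_comm (s := Finset.univ) (t := Finset.univ)
      (f := fun i j => ‖(σ * F) i j‖ ^ 2), Finset.mul_sum]
  refine Finset.sum_le_sum fun j _ => ?_
  have hcol := infNorm_mulVec_le σ (fun k => F k j)
  have heq : ∀ i, (σ.mulVec fun k => F k j) i = (σ * F) i j := by
    intro i
    simp [Matrix.mulVec, Matrix.mul_apply, dotProduct]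
  have h2 : vecNorm (σ.mulVec fun k => F k j) = Real.sqrt (∑ i, ‖(σ * F) i j‖ ^ 2) := by
    unfold vecNorm
    simp only [heq]
  rw [h2] at hcol
  have h3 : 0 ≤ ∑ i, ‖F i j‖ ^ 2 := Finset.sum_nonneg fun i _ => by positivity
  have h4 : 0 ≤ ∑ i, ‖(σ * F) i j‖ ^ 2 := Finset.sum_nonneg fun i _ => by positivity
  have h5 : vecNorm (fun k => F k j) = Real.sqrt (∑ i, ‖F i j‖ ^ 2) := rfl
  rw [h5] at hcol
  have hsq := mul_le_mul hcol hcol (by positivity) (Real.sqrt_nonneg _)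
  nlinarith [Real.mul_self_sqrt h3, Real.mul_self_sqrt h4,
    Real.sqrt_nonneg (∑ i, ‖F i j‖ ^ 2), Real.sqrt_nonneg (∑ i, ‖(σ * F) i j‖ ^ 2)]

lemma one_le_dualNorm {t : (Fin d → ℚ_[p]) × (Fin d → ℚ_[p]) × ℚ_[p]}
    (ht : IsDualPt p d t) : 1 ≤ dualNorm p d t := by
  have h : 1 ≤ ‖t.2.2‖ := by
    rcases ht.1 with h | h
    · rw [h]; simp
    · exact le_of_lt h.1
  exact le_trans h (le_max_right _ _)

/-- Let `T` be a left-invariant operator on `H_d` with symbol `σ`,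
acting on the Fourier side by `f̂(π) ↦ σ(π) f̂(π)`. If there exist `m ∈ ℝ` and `C > 0`
with `‖σ(ξ,η,λ)‖_inf ≥ C ‖(ξ,η,λ)‖_p^m` for all sufficiently large `‖(ξ,η,λ)‖_p`, then `T`
is globally hypoelliptic: if `Tf = g` with `f` a distribution and `g` Schwartz, then `f` is
Schwartz. -/
theorem fourier_multiplier_globally_hypoelliptic
    (σ F : ∀ t : (Fin d → ℚ_[p]) × (Fin d → ℚ_[p]) × ℚ_[p],
      Matrix (Fin d → Fin (p ^ nLam p t.2.2)) (Fin d → Fin (p ^ nLam p t.2.2)) ℂ)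
    (hell : ∃ (m : ℝ) (C R : ℝ), 0 < C ∧ ∀ t, IsDualPt p d t → R ≤ dualNorm p d t →
      C * dualNorm p d t ^ m ≤ infNorm (σ t))
    (hF : IsTemperedField p d F)
    (hTF : IsSchwartzField p d fun t => σ t * F t) :
    IsSchwartzField p d F := by
  obtain ⟨m, C, R, hC, hσ⟩ := hell
  obtain ⟨k0, C0, hF0⟩ := hF
  intro k
  obtain ⟨C1, hC1⟩ := hTF (k + ⌈-m⌉₊)
  set k' : ℕ := k + ⌈-m⌉₊ with hk'
  set R1 : ℝ := max R 1 with hR1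
  have hR1pos : (0:ℝ) < R1 := lt_of_lt_of_le one_pos (le_max_right _ _)
  refine ⟨max (max C0 0 * R1 ^ (k0:ℝ) * R1 ^ (k:ℝ)) (max C1 0 / C), fun t ht => ?_⟩
  have h1 : (1:ℝ) ≤ dualNorm p d t := one_le_dualNorm p d ht
  have hpos : (0:ℝ) < dualNorm p d t := lt_of_lt_of_le one_pos h1
  have hFpos : 0 ≤ hsNorm (F t) := Real.sqrt_nonneg _
  have hknonneg : (0:ℝ) < dualNorm p d t ^ (-(k:ℝ)) := Real.rpow_pos_of_pos hpos _
  by_cases hR : R ≤ dualNorm p d t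
  · -- large frequencies
    have h2 := hσ t ht hR
    have h3 := infNorm_mul_hsNorm_le (σ t) (F t)
    have h4 := hC1 t ht
    have h5 : C * dualNorm p d t ^ m * hsNorm (F t) ≤
        max C1 0 * dualNorm p d t ^ (-(k':ℝ)) := by
      calc C * dualNorm p d t ^ m * hsNorm (F t)
          ≤ infNorm (σ t) * hsNorm (F t) := mul_le_mul_of_nonneg_right h2 hFpos
        _ ≤ hsNorm (σ t * F t) := h3
        _ ≤ C1 * dualNorm p d t ^ (-(k':ℝ)) := h4
        _ ≤ max C1 0 * dualNorm p d t ^ (-(k':ℝ)) :=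
            mul_le_mul_of_nonneg_right (le_max_left _ _) (le_of_lt (Real.rpow_pos_of_pos hpos _))
    have hY : (0:ℝ) < C * dualNorm p d t ^ m := by
      have := Real.rpow_pos_of_pos hpos m
      positivity
    have h6 : hsNorm (F t) ≤
        max C1 0 * dualNorm p d t ^ (-(k':ℝ)) / (C * dualNorm p d t ^ m) := by
      rw [le_div_iff₀ hY]
      calc hsNorm (F t) * (C * dualNorm p d t ^ m)
          = C * dualNorm p d t ^ m * hsNorm (F t) := by ring
        _ ≤ _ := h5
    have h7 : max C1 0 * dualNorm p d t ^ (-(k':ℝ)) / (C * dualNorm p d t ^ m) =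
        max C1 0 / C * dualNorm p d t ^ (-(k':ℝ) - m) := by
      rw [Real.rpow_sub hpos]
      field_simp
    rw [h7] at h6
    have h8 : dualNorm p d t ^ (-(k':ℝ) - m) ≤ dualNorm p d t ^ (-(k:ℝ)) := by
      apply Real.rpow_le_rpow_of_exponent_le h1
      have : (-m : ℝ) ≤ (⌈-m⌉₊ : ℝ) := Nat.le_ceil _
      have hk'' : (k' : ℝ) = (k : ℝ) + (⌈-m⌉₊ : ℝ) := by
        rw [hk']; push_cast; ring
      linarith
    calc hsNorm (F t) ≤ max C1 0 / C * dualNorm p d t ^ (-(k':ℝ) - m) := h6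
      _ ≤ max C1 0 / C * dualNorm p d t ^ (-(k:ℝ)) :=
          mul_le_mul_of_nonneg_left h8 (by positivity)
      _ ≤ max (max C0 0 * R1 ^ (k0:ℝ) * R1 ^ (k:ℝ)) (max C1 0 / C) *
          dualNorm p d t ^ (-(k:ℝ)) :=
          mul_le_mul_of_nonneg_right (le_max_right _ _) (le_of_lt hknonneg)
  · -- small frequencies
    push_neg at hR
    have hdR1 : dualNorm p d t ≤ R1 := le_trans (le_of_lt hR) (le_max_left _ _)
    have hA : hsNorm (F t) ≤ max C0 0 * R1 ^ (k0:ℝ) := by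
      calc hsNorm (F t) ≤ C0 * dualNorm p d t ^ (k0:ℝ) := hF0 t ht
        _ ≤ max C0 0 * dualNorm p d t ^ (k0:ℝ) :=
            mul_le_mul_of_nonneg_right (le_max_left _ _)
              (le_of_lt (Real.rpow_pos_of_pos hpos _))
        _ ≤ max C0 0 * R1 ^ (k0:ℝ) :=
            mul_le_mul_of_nonneg_left
              (Real.rpow_le_rpow (le_of_lt hpos) hdR1 (by positivity)) (le_max_right _ _)
    have hone : (1:ℝ) ≤ R1 ^ (k:ℝ) * dualNorm p d t ^ (-(k:ℝ)) := by
      rw [Real.rpow_neg (le_of_lt hpos), ← div_eq_mul_inv, le_div_iff₀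
        (Real.rpow_pos_of_pos hpos _), one_mul]
      exact Real.rpow_le_rpow (le_of_lt hpos) hdR1 (by positivity)
    calc hsNorm (F t) ≤ max C0 0 * R1 ^ (k0:ℝ) := hA
      _ ≤ max C0 0 * R1 ^ (k0:ℝ) * (R1 ^ (k:ℝ) * dualNorm p d t ^ (-(k:ℝ))) := by
          nlinarith [hA, hFpos, mul_nonneg (le_max_right C0 0)
            (le_of_lt (Real.rpow_pos_of_pos hR1pos (k0:ℝ))),
            Real.rpow_pos_of_pos hR1pos (k0:ℝ)]
      _ = max C0 0 * R1 ^ (k0:ℝ) * R1 ^ (k:ℝ) * dualNorm p d t ^ (-(k:ℝ)) := by ring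
      _ ≤ max (max C0 0 * R1 ^ (k0:ℝ) * R1 ^ (k:ℝ)) (max C1 0 / C) *
          dualNorm p d t ^ (-(k:ℝ)) :=
          mul_le_mul_of_nonneg_right (le_max_left _ _) (le_of_lt hknonneg)

end
end

section
/- For the Vladimirov Laplacian L^s = Σ_{k=1}^d (∂_{X_k}^s + ∂_{Y_k}^s) + ∂_Z^s on H_d (s > 0), the symbol satisfies two-sided elliptic bounds: there exist C_1, C_2 > 0 with C_1 ‖(ξ,η,λ)‖_p^s ≤ ‖σ_{L^s}(ξ,η,λ)‖_inf ≤ ‖σ_{L^s}(ξ,η,λ)‖_op ≤ C_2 ‖(ξ,η,λ)‖_p^s for all (ξ,η,λ) in the unitary dual of H_d with ‖(ξ,η,λ)‖_p large. -/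
noncomputable section

variable (p : ℕ) [Fact p.Prime] (d : ℕ)

/-- The constant `(1 - p^{-1})/(1 - p^{-(s+1)})`. -/
def vtShift (s : ℝ) : ℝ := (1 - (p : ℝ)⁻¹) / (1 - (p : ℝ) ^ (-(s + 1)))

/-- The spectral bracket: `|w|_p^s - (1-p^{-1})/(1-p^{-(s+1)})` if `|w|_p > 1`, else `0`. -/
def brkt (s : ℝ) (w : ℚ_[p]) : ℝ := if 1 < ‖w‖ then ‖w‖ ^ s - vtShift p s else 0

/-- The eigenvalue of the Vladimirov Laplacian `L^s = ∑_k (∂_{X_k}^s + ∂_{Y_k}^s) + ∂_Z^s`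
on the one-dimensional invariant subspace of `V^{h'}_{(ξ,η,λ)}` indexed by `τ`. -/
def lapEigen (s : ℝ) (t : (Fin d → ℚ_[p]) × (Fin d → ℚ_[p]) × ℚ_[p])
    (τ : Fin d → ℚ_[p]) (h' : Fin d → ℕ) : ℝ :=
  (∑ k : Fin d, (brkt p s (t.1 k + τ k) + brkt p s (t.2.2 * ((h' k : ℕ) : ℚ_[p]) + t.2.1 k))) +
    brkt p s t.2.2


lemma one_lt_p (p : ℕ) [Fact p.Prime] : (1 : ℝ) < (p : ℝ) := by
  exact_mod_cast (Fact.out : p.Prime).one_lt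

lemma vtShift_pos (s : ℝ) (hs : 0 < s) : 0 < vtShift p s := by
  have hp := one_lt_p p
  have h1 : (0:ℝ) < 1 - (p : ℝ)⁻¹ := by
    have : (p:ℝ)⁻¹ < 1 := inv_lt_one_of_one_lt₀ hp
    linarith
  have h2 : (0:ℝ) < 1 - (p : ℝ) ^ (-(s + 1)) := by
    have : (p:ℝ) ^ (-(s + 1)) < 1 :=
      Real.rpow_lt_one_of_one_lt_of_neg hp (by linarith)
    linarith
  exact div_pos h1 h2

lemma vtShift_lt_one (s : ℝ) (hs : 0 < s) : vtShift p s < 1 := by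
  have hp := one_lt_p p
  have h2 : (0:ℝ) < 1 - (p : ℝ) ^ (-(s + 1)) := by
    have : (p:ℝ) ^ (-(s + 1)) < 1 :=
      Real.rpow_lt_one_of_one_lt_of_neg hp (by linarith)
    linarith
  unfold vtShift
  rw [div_lt_one h2]
  have hlt : (p:ℝ) ^ (-(s + 1)) < (p:ℝ) ^ (-1 : ℝ) := by
    exact Real.rpow_lt_rpow_left_iff hp |>.mpr (by linarith)
  rw [Real.rpow_neg_one] at hlt
  linarith

lemma brkt_nonneg (s : ℝ) (hs : 0 < s) (w : ℚ_[p]) : 0 ≤ brkt p s w := by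
  unfold brkt
  split_ifs with h
  · have h1 : (1:ℝ) < ‖w‖ ^ s := (Real.one_lt_rpow_iff_of_pos (by linarith)).mpr (Or.inl ⟨h, hs⟩)
    have := vtShift_lt_one p s hs
    linarith
  · exact le_refl 0

lemma brkt_le (s : ℝ) (hs : 0 < s) {w : ℚ_[p]} {N : ℝ} (hN : 1 ≤ N) (h : ‖w‖ ≤ N) :
    brkt p s w ≤ N ^ s := by
  unfold brkt
  split_ifs with hw
  · have h1 : ‖w‖ ^ s ≤ N ^ s := Real.rpow_le_rpow (norm_nonneg w) h hs.le
    have := vtShift_pos p s hs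
    linarith
  · exact Real.rpow_nonneg (by linarith) s

lemma brkt_eq (s : ℝ) {w : ℚ_[p]} {N : ℝ} (hN : 1 < N) (h : ‖w‖ = N) :
    brkt p s w = N ^ s - vtShift p s := by
  unfold brkt
  rw [h, if_pos hN]

/-- The symbol of the Vladimirov Laplacian `L^s` (`s > 0`) on `H_d`
satisfies two-sided elliptic bounds: there exist `C₁, C₂ > 0` with
`C₁‖(ξ,η,λ)‖_p^s ≤ ‖σ_{L^s}(ξ,η,λ)‖_inf ≤ ‖σ_{L^s}(ξ,η,λ)‖_op ≤ C₂‖(ξ,η,λ)‖_p^s`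
for all dual points with `‖(ξ,η,λ)‖_p` large; equivalently, all the eigenvalues of the symbol
(indexed by the invariant subspaces, i.e. by `h'` and `τ`) lie between `C₁‖(ξ,η,λ)‖_p^s` and
`C₂‖(ξ,η,λ)‖_p^s`. -/
theorem vladimirov_laplacian_elliptic_bounds (s : ℝ) (hs : 0 < s) :
    ∃ C₁ C₂ R : ℝ, 0 < C₁ ∧ 0 < C₂ ∧
      ∀ t : (Fin d → ℚ_[p]) × (Fin d → ℚ_[p]) × ℚ_[p], IsDualPt p d t →
        R ≤ dualNorm p d t →
        ∀ (τ : Fin d → ℚ_[p]) (h' : Fin d → ℕ),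
          (∀ i, (padicFract p (τ i) : ℚ_[p]) = τ i ∧ ‖τ i‖ ≤ ‖t.2.2‖) →
          (∀ i, h' i < p ^ nLam p t.2.2) →
          C₁ * dualNorm p d t ^ s ≤ lapEigen p d s t τ h' ∧
            lapEigen p d s t τ h' ≤ C₂ * dualNorm p d t ^ s := by
  classical
  refine ⟨1/2, 2 * d + 1, max 2 ((2:ℝ) ^ s⁻¹), by norm_num, by positivity, ?_⟩
  rintro t hdual hR τ h' hτ hh'
  set N := dualNorm p d t with hNdef
  have hvpos := vtShift_pos p s hs
  have hvlt := vtShift_lt_one p s hs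
  have hN2 : (2:ℝ) ≤ N := (le_max_left _ _).trans hR
  have hN1 : (1:ℝ) < N := by linarith
  have hNs2 : (2:ℝ) ≤ N ^ s := by
    have h0 : (0:ℝ) < (2:ℝ) ^ s⁻¹ := Real.rpow_pos_of_pos (by norm_num) _
    have h1 : ((2:ℝ) ^ s⁻¹) ^ s ≤ N ^ s :=
      Real.rpow_le_rpow h0.le ((le_max_right _ _).trans hR) hs.le
    rwa [← Real.rpow_mul (by norm_num : (0:ℝ) ≤ 2), inv_mul_cancel₀ hs.ne',
      Real.rpow_one] at h1
  -- lambda has norm at least 1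
  have hlam1 : (1:ℝ) ≤ ‖t.2.2‖ := by
    rcases hdual.1 with h | h
    · rw [h]; simp
    · exact h.1.le
  have hlamN : ‖t.2.2‖ ≤ N := le_max_right _ _
  -- everything is bounded by N
  have hbdd1 : BddAbove (Set.range fun i => ‖t.1 i‖) := Finite.bddAbove_range _
  have hbdd2 : BddAbove (Set.range fun i => ‖t.2.1 i‖) := Finite.bddAbove_range _
  have hξN : ∀ k, ‖t.1 k‖ ≤ N := fun k =>
    (le_ciSup hbdd1 k).trans ((le_max_left _ _).trans (le_max_left _ _))
  have hηN : ∀ k, ‖t.2.1 k‖ ≤ N := fun k =>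
    (le_ciSup hbdd2 k).trans ((le_max_right _ _).trans (le_max_left _ _))
  have hhk : ∀ k, ‖t.2.2 * ((h' k : ℕ) : ℚ_[p])‖ ≤ ‖t.2.2‖ := by
    intro k
    rw [norm_mul]
    have : ‖(((h' k : ℕ) : ℤ) : ℚ_[p])‖ ≤ 1 := Padic.norm_int_le_one _
    rw [Int.cast_natCast] at this
    calc ‖t.2.2‖ * ‖((h' k : ℕ) : ℚ_[p])‖ ≤ ‖t.2.2‖ * 1 :=
          mul_le_mul_of_nonneg_left this (norm_nonneg _)
      _ = ‖t.2.2‖ := mul_one _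
  constructor
  · -- lower bound
    have key : N ^ s - vtShift p s ≤ lapEigen p d s t τ h' := by
      by_cases hcase : N ≤ ‖t.2.2‖
      · have heq : ‖t.2.2‖ = N := le_antisymm hlamN hcase
        have hb : brkt p s t.2.2 = N ^ s - vtShift p s := brkt_eq p s hN1 heq
        have hsum : (0:ℝ) ≤ ∑ k : Fin d,
            (brkt p s (t.1 k + τ k) + brkt p s (t.2.2 * ((h' k : ℕ) : ℚ_[p]) + t.2.1 k)) :=
          Finset.sum_nonneg fun k _ =>
            add_nonneg (brkt_nonneg p s hs _) (brkt_nonneg p s hs _)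
        unfold lapEigen
        rw [hb] at *
        linarith
      · push_neg at hcase
        have hd : Nonempty (Fin d) := by
          rcases isEmpty_or_nonempty (Fin d) with he | hne
          · exfalso
            have h1 : (⨆ i, ‖t.1 i‖) = 0 := Real.iSup_of_isEmpty _
            have h2 : (⨆ i, ‖t.2.1 i‖) = 0 := Real.iSup_of_isEmpty _
            have : N = ‖t.2.2‖ := by
              rw [hNdef]; unfold dualNorm; rw [h1, h2]
              simp [max_eq_right (by linarith : (0:ℝ) ≤ ‖t.2.2‖)]
            linarith
          · exact hne
        have hN' : N = max (max (⨆ i, ‖t.1 i‖) (⨆ i, ‖t.2.1 i‖)) ‖t.2.2‖ := by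
          rw [hNdef]; rfl
        have hmaxN : N = max (⨆ i, ‖t.1 i‖) (⨆ i, ‖t.2.1 i‖) := by
          rcases le_or_gt ‖t.2.2‖ (max (⨆ i, ‖t.1 i‖) (⨆ i, ‖t.2.1 i‖)) with h | h
          · rw [hN', max_eq_left h]
          · exfalso
            have hNl : N = ‖t.2.2‖ := by rw [hN', max_eq_right h.le]
            linarith
        by_cases hξ : N ≤ ⨆ i, ‖t.1 i‖
        · obtain ⟨i, hi⟩ := exists_eq_ciSup_of_finite (f := fun i => ‖t.1 i‖)
          have hiN : ‖t.1 i‖ = N := le_antisymm (hξN i) (by rw [hi]; exact hξ)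
          have hτi : ‖τ i‖ < ‖t.1 i‖ := by
            have := (hτ i).2
            rw [hiN]; linarith
          have hne : ‖t.1 i‖ ≠ ‖τ i‖ := (ne_of_lt hτi).symm
          have hadd : ‖t.1 i + τ i‖ = N := by
            rw [Padic.add_eq_max_of_ne hne, max_eq_left hτi.le, hiN]
          have hb : brkt p s (t.1 i + τ i) = N ^ s - vtShift p s := brkt_eq p s hN1 hadd
          have h1 : brkt p s (t.1 i + τ i) ≤
              brkt p s (t.1 i + τ i) + brkt p s (t.2.2 * ((h' i : ℕ) : ℚ_[p]) + t.2.1 i) :=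
            le_add_of_nonneg_right (brkt_nonneg p s hs _)
          have h2 : brkt p s (t.1 i + τ i) + brkt p s (t.2.2 * ((h' i : ℕ) : ℚ_[p]) + t.2.1 i) ≤
              ∑ k : Fin d, (brkt p s (t.1 k + τ k) +
                brkt p s (t.2.2 * ((h' k : ℕ) : ℚ_[p]) + t.2.1 k)) :=
            Finset.single_le_sum (f := fun k => brkt p s (t.1 k + τ k) +
                brkt p s (t.2.2 * ((h' k : ℕ) : ℚ_[p]) + t.2.1 k))
              (fun k _ => add_nonneg (brkt_nonneg p s hs _) (brkt_nonneg p s hs _))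
              (Finset.mem_univ i)
          have h3 : (0:ℝ) ≤ brkt p s t.2.2 := brkt_nonneg p s hs _
          unfold lapEigen
          rw [hb] at h1
          linarith
        · push_neg at hξ
          have hη : N ≤ ⨆ i, ‖t.2.1 i‖ := by
            rcases max_cases (⨆ i, ‖t.1 i‖) (⨆ i, ‖t.2.1 i‖) with ⟨he, _⟩ | ⟨he, _⟩
            · exfalso; rw [hmaxN, he] at hξ; exact lt_irrefl _ hξ
            · rw [hmaxN, he]
          obtain ⟨i, hi⟩ := exists_eq_ciSup_of_finite (f := fun i => ‖t.2.1 i‖)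
          have hiN : ‖t.2.1 i‖ = N := le_antisymm (hηN i) (by rw [hi]; exact hη)
          have hlt : ‖t.2.2 * ((h' i : ℕ) : ℚ_[p])‖ < ‖t.2.1 i‖ := by
            have := hhk i
            rw [hiN]; linarith
          have hne : ‖t.2.2 * ((h' i : ℕ) : ℚ_[p])‖ ≠ ‖t.2.1 i‖ := ne_of_lt hlt
          have hadd : ‖t.2.2 * ((h' i : ℕ) : ℚ_[p]) + t.2.1 i‖ = N := by
            rw [Padic.add_eq_max_of_ne hne, max_eq_right hlt.le, hiN]
          have hb : brkt p s (t.2.2 * ((h' i : ℕ) : ℚ_[p]) + t.2.1 i) = N ^ s - vtShift p s :=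
            brkt_eq p s hN1 hadd
          have h1 : brkt p s (t.2.2 * ((h' i : ℕ) : ℚ_[p]) + t.2.1 i) ≤
              brkt p s (t.1 i + τ i) + brkt p s (t.2.2 * ((h' i : ℕ) : ℚ_[p]) + t.2.1 i) :=
            le_add_of_nonneg_left (brkt_nonneg p s hs _)
          have h2 : brkt p s (t.1 i + τ i) + brkt p s (t.2.2 * ((h' i : ℕ) : ℚ_[p]) + t.2.1 i) ≤
              ∑ k : Fin d, (brkt p s (t.1 k + τ k) +
                brkt p s (t.2.2 * ((h' k : ℕ) : ℚ_[p]) + t.2.1 k)) :=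
            Finset.single_le_sum (f := fun k => brkt p s (t.1 k + τ k) +
                brkt p s (t.2.2 * ((h' k : ℕ) : ℚ_[p]) + t.2.1 k))
              (fun k _ => add_nonneg (brkt_nonneg p s hs _) (brkt_nonneg p s hs _))
              (Finset.mem_univ i)
          have h3 : (0:ℝ) ≤ brkt p s t.2.2 := brkt_nonneg p s hs _
          unfold lapEigen
          rw [hb] at h1
          linarith
    have : (1/2 : ℝ) * N ^ s ≤ N ^ s - vtShift p s := by linarith
    linarith
  · -- upper bound
    unfold lapEigen
    have hterm : ∀ k : Fin d, brkt p s (t.1 k + τ k) +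
        brkt p s (t.2.2 * ((h' k : ℕ) : ℚ_[p]) + t.2.1 k) ≤ 2 * N ^ s := by
      intro k
      have e1 : ‖t.1 k + τ k‖ ≤ N :=
        (Padic.nonarchimedean _ _).trans
          (max_le (hξN k) ((hτ k).2.trans hlamN))
      have e2 : ‖t.2.2 * ((h' k : ℕ) : ℚ_[p]) + t.2.1 k‖ ≤ N :=
        (Padic.nonarchimedean _ _).trans
          (max_le ((hhk k).trans hlamN) (hηN k))
      have b1 := brkt_le p s hs hN1.le e1
      have b2 := brkt_le p s hs hN1.le e2
      linarith
    have hsum : (∑ k : Fin d, (brkt p s (t.1 k + τ k) +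
        brkt p s (t.2.2 * ((h' k : ℕ) : ℚ_[p]) + t.2.1 k))) ≤ ∑ _k : Fin d, 2 * N ^ s :=
      Finset.sum_le_sum fun k _ => hterm k
    have hlast : brkt p s t.2.2 ≤ N ^ s := brkt_le p s hs hN1.le hlamN
    have : (∑ _k : Fin d, 2 * N ^ s) = (d : ℝ) * (2 * N ^ s) := by
      rw [Finset.sum_const, Finset.card_univ, Fintype.card_fin, nsmul_eq_mul]
    rw [this] at hsum
    have : (2 * (d:ℝ) + 1) * N ^ s = (d:ℝ) * (2 * N ^ s) + N ^ s := by ring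
    rw [this]
    linarith


end
end
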